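/- Let A be a normal disjunctive bounded distributive lattice. Then the maximal spectrum S(A), the set of maximal proper filters of A topologized by taking the sets a♯ = {M ∈ S(A) : a ∈ M}, a ∈ A, as a closed base, is a compact Hausdorff space, and the map a ↦ a♯ is a lattice isomorphism from A onto the canonical closed-set base {a♯ : a ∈ A} of S(A). -/

import Mathlib

open Set

universe u v

/-- A (lattice) filter: a nonempty, upward-closed subset closed under meets. -/
def IsLatFilter {A : Type u} [DistribLattice A] [BoundedOrder A] (F : Set A) : Prop :=
  F.Nonempty ∧ (∀ a ∈ F, ∀ b : A, a ≤ b → b ∈ F) ∧ ∀ a ∈ F, ∀ b ∈ F, a ⊓ b ∈ F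

/-- A proper filter: a filter omitting `⊥`. -/
def IsProperLatFilter {A : Type u} [DistribLattice A] [BoundedOrder A] (F : Set A) : Prop :=
  IsLatFilter F ∧ (⊥ : A) ∉ F

/-- A prime filter: a proper filter `F` with `a ⊔ b ∈ F → a ∈ F ∨ b ∈ F`. -/
def IsPrimeLatFilter {A : Type u} [DistribLattice A] [BoundedOrder A] (F : Set A) : Prop :=
  IsProperLatFilter F ∧ ∀ a b : A, a ⊔ b ∈ F → a ∈ F ∨ b ∈ F

/-- A maximal filter: a proper filter maximal under inclusion. -/
def IsMaxLatFilter {A : Type u} [DistribLattice A] [BoundedOrder A] (F : Set A) : Prop :=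
  IsProperLatFilter F ∧ ∀ G : Set A, IsProperLatFilter G → F ⊆ G → G = F

/-- A bounded distributive lattice is normal if disjoint elements can be
separated: whenever `a ⊓ b = ⊥` there are `a', b'` with `a ⊓ a' = ⊥`,
`b ⊓ b' = ⊥` and `a' ⊔ b' = ⊤`. -/
def IsNormalLattice (A : Type u) [DistribLattice A] [BoundedOrder A] : Prop :=
  ∀ a b : A, a ⊓ b = ⊥ → ∃ a' b' : A, a ⊓ a' = ⊥ ∧ b ⊓ b' = ⊥ ∧ a' ⊔ b' = ⊤

/-- A bounded distributive lattice is disjunctive if for any two distinct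
elements there is a nonbottom element below one of them and disjoint from the
other. -/
def IsDisjunctiveLattice (A : Type u) [DistribLattice A] [BoundedOrder A] : Prop :=
  ∀ a b : A, a ≠ b → ∃ c : A, c ≠ ⊥ ∧ ((c ≤ a ∧ c ⊓ b = ⊥) ∨ (c ≤ b ∧ c ⊓ a = ⊥))

/-- The maximal spectrum: the set of maximal proper filters of `A`. -/
def MaxSpec (A : Type u) [DistribLattice A] [BoundedOrder A] :=
  {M : Set A // IsMaxLatFilter M}

/-- `a♯ = {M ∈ S(A) : a ∈ M}`. -/
def sharp {A : Type u} [DistribLattice A] [BoundedOrder A] (a : A) : Set (MaxSpec A) :=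
  {M : MaxSpec A | a ∈ M.1}

/-- The spectral topology on `MaxSpec A`, with the sets `a♯` as a closed base. -/
def specTop (A : Type u) [DistribLattice A] [BoundedOrder A] :
    TopologicalSpace (MaxSpec A) :=
  TopologicalSpace.generateFrom {s | ∃ a : A, s = (sharp a)ᶜ}

/-
Maximal filters are prime, so `a ↦ a♯` preserves joins as well as meets, and
disjunctivity makes it injective. A cover of `S(A)` by basic open sets `(a♯)ᶜ`, `a ∈ T`, leaves no
maximal filter containing `T`; by Zorn, some finite meet of elements of `T` is `⊥`, which yields a
finite subcover, and Alexander's subbasis theorem gives compactness. Two distinct maximal filters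
contain disjoint elements `a`, `b`; normality provides `a'`, `b'` with `a ⊓ a' = b ⊓ b' = ⊥` and
`a' ⊔ b' = ⊤`, so `(a'♯)ᶜ` and `(b'♯)ᶜ` are disjoint neighbourhoods of the two points.
-/

section LatFilter

variable {A : Type u} [DistribLattice A] [BoundedOrder A]

namespace IsLatFilter

variable {F : Set A}

lemma mem_of_le (hF : IsLatFilter F) {a b : A} (ha : a ∈ F) (hab : a ≤ b) : b ∈ F :=
  hF.2.1 a ha b hab

lemma inf_mem (hF : IsLatFilter F) {a b : A} (ha : a ∈ F) (hb : b ∈ F) : a ⊓ b ∈ F :=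
  hF.2.2 a ha b hb

lemma top_mem (hF : IsLatFilter F) : (⊤ : A) ∈ F :=
  let ⟨_, ha⟩ := hF.1
  hF.mem_of_le ha le_top

lemma finset_inf_mem (hF : IsLatFilter F) {s : Finset A} (hs : ∀ a ∈ s, a ∈ F) :
    s.inf id ∈ F :=
  Finset.inf_mem F hF.top_mem (fun _ ha _ hb => hF.inf_mem ha hb) s id hs

end IsLatFilter

lemma IsProperLatFilter.notMem_of_inf_eq_bot {F : Set A} (hF : IsProperLatFilter F) {a b : A}
    (ha : a ∈ F) (hab : a ⊓ b = ⊥) : b ∉ F := fun hb =>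
  hF.2 (hab ▸ hF.1.inf_mem ha hb)

lemma IsProperLatFilter.exists_isMaxLatFilter_superset {F : Set A} (hF : IsProperLatFilter F) :
    ∃ M, IsMaxLatFilter M ∧ F ⊆ M := by
  obtain ⟨M, hFM, hM⟩ := zorn_subset_nonempty {G : Set A | IsProperLatFilter G}
    (fun c hc hchain ⟨G₀, hG₀⟩ => by
      refine ⟨⋃₀ c, ⟨⟨⟨⊤, G₀, hG₀, (hc hG₀).1.top_mem⟩, ?_, ?_⟩, ?_⟩,
        fun _ => subset_sUnion_of_mem⟩
      · rintro a ⟨G, hG, ha⟩ b hab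
        exact ⟨G, hG, (hc hG).1.mem_of_le ha hab⟩
      · rintro a ⟨G, hG, ha⟩ b ⟨H, hH, hb⟩
        rcases hchain.total hG hH with hGH | hHG
        · exact ⟨H, hH, (hc hH).1.inf_mem (hGH ha) hb⟩
        · exact ⟨G, hG, (hc hG).1.inf_mem ha (hHG hb)⟩
      · rintro ⟨G, hG, hbot⟩
        exact (hc hG).2 hbot) F hF
  exact ⟨M, ⟨hM.1, fun G hG hMG => (hM.2 hG hMG).antisymm hMG⟩, hFM⟩

lemma exists_isMaxLatFilter_mem {c : A} (hc : c ≠ ⊥) : ∃ M, IsMaxLatFilter M ∧ c ∈ M := by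
  have hIci : IsProperLatFilter (Ici c) :=
    ⟨⟨nonempty_Ici, fun _ ha _ hab => le_trans ha hab, fun _ ha _ hb => le_inf ha hb⟩,
      fun h => hc (le_bot_iff.mp h)⟩
  obtain ⟨M, hM, hcM⟩ := hIci.exists_isMaxLatFilter_superset
  exact ⟨M, hM, hcM (le_refl c)⟩

lemma exists_isMaxLatFilter_superset_of_finset_inf_ne_bot {T : Set A}
    (hT : ∀ s : Finset A, ↑s ⊆ T → s.inf id ≠ ⊥) : ∃ M, IsMaxLatFilter M ∧ T ⊆ M := by
  classical
  have hgen : IsProperLatFilter {x : A | ∃ s : Finset A, ↑s ⊆ T ∧ s.inf id ≤ x} := by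
    refine ⟨⟨⟨⊤, ∅, by simp⟩, ?_, ?_⟩, ?_⟩
    · rintro a ⟨s, hsT, hsa⟩ b hab
      exact ⟨s, hsT, hsa.trans hab⟩
    · rintro a ⟨s, hsT, hsa⟩ b ⟨t, htT, htb⟩
      refine ⟨s ∪ t, by simpa using union_subset hsT htT, ?_⟩
      rw [Finset.inf_union]
      exact inf_le_inf hsa htb
    · rintro ⟨s, hsT, hs⟩
      exact hT s hsT (le_bot_iff.mp hs)
  obtain ⟨M, hM, hgenM⟩ := hgen.exists_isMaxLatFilter_superset
  exact ⟨M, hM, fun a ha => hgenM ⟨{a}, by simpa using ha, by simp⟩⟩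

namespace IsMaxLatFilter

variable {M : Set A}

lemma eq_of_subset (hM : IsMaxLatFilter M) {N : Set A} (hN : IsMaxLatFilter N) (hMN : M ⊆ N) :
    M = N :=
  (hM.2 N hN.1 hMN).symm

lemma exists_inf_eq_bot_of_notMem (hM : IsMaxLatFilter M) {a : A} (ha : a ∉ M) :
    ∃ m ∈ M, m ⊓ a = ⊥ := by
  by_contra! h
  -- the filter generated by `M ∪ {a}` would be proper
  let G : Set A := {x | ∃ m ∈ M, m ⊓ a ≤ x}
  have hMG : M ⊆ G := fun m hm => ⟨m, hm, inf_le_left⟩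
  have hG : IsProperLatFilter G := by
    refine ⟨⟨⟨⊤, hMG hM.1.1.top_mem⟩, ?_, ?_⟩, ?_⟩
    · rintro x ⟨m, hm, hx⟩ y hxy
      exact ⟨m, hm, hx.trans hxy⟩
    · rintro x ⟨m, hm, hx⟩ y ⟨n, hn, hy⟩
      refine ⟨m ⊓ n, hM.1.1.inf_mem hm hn, le_inf ?_ ?_⟩
      · exact (inf_le_inf_right a inf_le_left).trans hx
      · exact (inf_le_inf_right a inf_le_right).trans hy
    · rintro ⟨m, hm, hma⟩
      exact h m hm (le_bot_iff.mp hma)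
  exact ha (hM.2 G hG hMG ▸ ⟨⊤, hM.1.1.top_mem, by simp⟩)

lemma mem_or_mem_of_sup_mem (hM : IsMaxLatFilter M) {a b : A} (hab : a ⊔ b ∈ M) :
    a ∈ M ∨ b ∈ M := by
  by_contra! h
  obtain ⟨m, hm, hma⟩ := hM.exists_inf_eq_bot_of_notMem h.1
  obtain ⟨n, hn, hnb⟩ := hM.exists_inf_eq_bot_of_notMem h.2
  have hbot : m ⊓ n ⊓ (a ⊔ b) = ⊥ := by
    rw [inf_sup_left, inf_right_comm, hma, inf_assoc, hnb]
    simp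
  exact hM.1.notMem_of_inf_eq_bot (hM.1.1.inf_mem hm hn) hbot hab

lemma exists_inf_eq_bot_of_ne (hM : IsMaxLatFilter M) {N : Set A} (hN : IsMaxLatFilter N)
    (hMN : M ≠ N) : ∃ a ∈ M, ∃ b ∈ N, a ⊓ b = ⊥ := by
  obtain ⟨a, haM, haN⟩ := not_subset.mp fun h => hMN (hM.eq_of_subset hN h)
  obtain ⟨b, hbN, hba⟩ := hN.exists_inf_eq_bot_of_notMem haN
  exact ⟨a, haM, b, hbN, by rw [inf_comm, hba]⟩

end IsMaxLatFilter

end LatFilter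

section Sharp

variable {A : Type u} [DistribLattice A] [BoundedOrder A]

lemma sharp_bot : sharp (⊥ : A) = ∅ :=
  eq_empty_iff_forall_notMem.mpr fun M => M.2.1.2

lemma sharp_top : sharp (⊤ : A) = univ :=
  eq_univ_iff_forall.mpr fun M => M.2.1.1.top_mem

lemma sharp_inf (a b : A) : sharp (a ⊓ b) = sharp a ∩ sharp b := by
  ext M
  exact ⟨fun h => ⟨M.2.1.1.mem_of_le h inf_le_left, M.2.1.1.mem_of_le h inf_le_right⟩,
    fun h => M.2.1.1.inf_mem h.1 h.2⟩

lemma sharp_sup (a b : A) : sharp (a ⊔ b) = sharp a ∪ sharp b := by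
  ext M
  exact ⟨M.2.mem_or_mem_of_sup_mem,
    fun h => h.elim (M.2.1.1.mem_of_le · le_sup_left) (M.2.1.1.mem_of_le · le_sup_right)⟩

lemma sharp_ne_of_le_of_inf_eq_bot {a b c : A} (hc : c ≠ ⊥) (hca : c ≤ a) (hcb : c ⊓ b = ⊥) :
    sharp a ≠ sharp b := by
  obtain ⟨M, hM, hcM⟩ := exists_isMaxLatFilter_mem hc
  intro hab
  have haM : (⟨M, hM⟩ : MaxSpec A) ∈ sharp a := hM.1.1.mem_of_le hcM hca
  rw [hab] at haM
  exact hM.1.notMem_of_inf_eq_bot hcM hcb haM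

lemma sharp_injective (hd : IsDisjunctiveLattice A) : Function.Injective (sharp (A := A)) := by
  intro a b hab
  by_contra hne
  obtain ⟨c, hc, ⟨hca, hcb⟩ | ⟨hcb, hca⟩⟩ := hd a b hne
  · exact sharp_ne_of_le_of_inf_eq_bot hc hca hcb hab
  · exact sharp_ne_of_le_of_inf_eq_bot hc hcb hca hab.symm

end Sharp

section SpecTop

variable {A : Type u} [DistribLattice A] [BoundedOrder A]

local instance : TopologicalSpace (MaxSpec A) := specTop A

lemma isOpen_compl_sharp (a : A) : IsOpen (sharp a)ᶜ :=
  TopologicalSpace.isOpen_generateFrom_of_mem ⟨a, rfl⟩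

lemma isClosed_sharp (a : A) : IsClosed (sharp a) :=
  isOpen_compl_iff.mp (isOpen_compl_sharp a)

lemma isTopologicalBasis_compl_sharp :
    TopologicalSpace.IsTopologicalBasis {s : Set (MaxSpec A) | ∃ a : A, s = (sharp a)ᶜ} := by
  refine ⟨?_, ?_, rfl⟩
  · rintro _ ⟨a, rfl⟩ _ ⟨b, rfl⟩ M hM
    exact ⟨(sharp (a ⊔ b))ᶜ, ⟨a ⊔ b, rfl⟩, by rwa [sharp_sup, compl_union], by
      rw [sharp_sup, compl_union]⟩
  · exact sUnion_eq_univ_iff.mpr fun _ => ⟨(sharp ⊥)ᶜ, ⟨⊥, rfl⟩, by simp [sharp_bot]⟩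

lemma isClosed_iff_eq_biInter_sharp (s : Set (MaxSpec A)) :
    IsClosed s ↔ ∃ T : Set A, s = ⋂ a ∈ T, sharp a := by
  refine ⟨fun hs => ⟨{a | s ⊆ sharp a}, ?_⟩, ?_⟩
  · refine Subset.antisymm (subset_iInter₂ fun _ h => h) fun M hM => by_contra fun hMs => ?_
    obtain ⟨_, ⟨a, rfl⟩, hMa, has⟩ :=
      isTopologicalBasis_compl_sharp.isOpen_iff.mp hs.isOpen_compl M hMs
    exact hMa (mem_iInter₂.mp hM a (compl_subset_compl.mp has))
  · rintro ⟨T, rfl⟩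
    exact isClosed_biInter fun a _ => isClosed_sharp a

lemma compactSpace_maxSpec : CompactSpace (MaxSpec A) := by
  refine compactSpace_generateFrom rfl fun P hP hcover => ?_
  let T : Set A := {a | (sharp a)ᶜ ∈ P}
  obtain ⟨s, hsT, hs⟩ : ∃ s : Finset A, ↑s ⊆ T ∧ s.inf id = ⊥ := by
    by_contra! hT
    obtain ⟨M, hM, hTM⟩ := exists_isMaxLatFilter_superset_of_finset_inf_ne_bot hT
    obtain ⟨_, hU, hMU⟩ := mem_sUnion.mp (hcover ▸ mem_univ (⟨M, hM⟩ : MaxSpec A))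
    obtain ⟨a, rfl⟩ := hP hU
    exact hMU (hTM hU)
  refine ⟨(fun a => (sharp a)ᶜ) '' s, image_subset_iff.mpr hsT, s.finite_toSet.image _,
    eq_univ_of_forall fun M => ?_⟩
  by_contra hM
  simp only [sUnion_image, mem_iUnion, mem_compl_iff, not_exists, not_not] at hM
  exact M.2.1.2 (hs ▸ M.2.1.1.finset_inf_mem fun a ha => hM a ha)

lemma t2Space_maxSpec (hn : IsNormalLattice A) : T2Space (MaxSpec A) := by
  refine ⟨fun M N hMN => ?_⟩
  obtain ⟨a, haM, b, hbN, hab⟩ :=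
    M.2.exists_inf_eq_bot_of_ne N.2 fun h => hMN (Subtype.ext h)
  obtain ⟨a', b', haa', hbb', hsup⟩ := hn a b hab
  refine ⟨(sharp a')ᶜ, (sharp b')ᶜ, isOpen_compl_sharp a', isOpen_compl_sharp b',
    M.2.1.notMem_of_inf_eq_bot haM haa', N.2.1.notMem_of_inf_eq_bot hbN hbb', ?_⟩
  rw [disjoint_compl_left_iff_subset, compl_subset_iff_union, ← sharp_sup, sup_comm, hsup,
    sharp_top]

end SpecTop

theorem maxSpec_compact_hausdorff_and_sharp_iso (A : Type u) [DistribLattice A]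
    [BoundedOrder A] (hn : IsNormalLattice A) (hd : IsDisjunctiveLattice A) :
    letI := specTop A
    CompactSpace (MaxSpec A) ∧ T2Space (MaxSpec A) ∧
    (∀ s : Set (MaxSpec A), IsClosed s ↔ ∃ T : Set A, s = ⋂ a ∈ T, sharp a) ∧
    (∀ a : A, IsClosed (sharp a)) ∧
    Function.Injective (sharp (A := A)) ∧
    sharp (⊥ : A) = ∅ ∧ sharp (⊤ : A) = Set.univ ∧
    (∀ a b : A, sharp (a ⊔ b) = sharp a ∪ sharp b) ∧
    (∀ a b : A, sharp (a ⊓ b) = sharp a ∩ sharp b) :=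
  ⟨compactSpace_maxSpec, t2Space_maxSpec hn, isClosed_iff_eq_biInter_sharp, isClosed_sharp,
    sharp_injective hd, sharp_bot, sharp_top, sharp_sup, sharp_inf⟩
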